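/- The sets X_max of maximal paths and X_min of minimal paths in the Euler path space are countable. -/

import Mathlib

open MeasureTheory Filter
open scoped ENNReal

/-- The Euler path space: a point is an infinite edge path in the Euler graph,
`x n : Fin (n+2)` being the label of the edge chosen from level `n` to level `n+1`. -/
abbrev EulerPath : Type := ∀ n : ℕ, Fin (n + 2)

/-- Vertex labels: `kv x n` is the `k` with the path `x` passing through vertex `(n,k)`.
A label `(x n : ℕ) ≤ kv x n` is a left turn (edge to `(n+1, kv x n)`), a larger label
is a right turn (edge to `(n+1, kv x n + 1)`). -/
def kv (x : EulerPath) : ℕ → ℕ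
  | 0 => 0
  | n + 1 => if (x n : ℕ) ≤ kv x n then kv x n else kv x n + 1

/-- The symmetric measure: the product over `n` of the uniform probability measures on
`Fin (n+2)`, characterized as the probability measure giving each cylinder of length `n`
the measure `∏_{i<n} 1/(i+2)`. -/
def IsSymmetricMeasure (η : Measure EulerPath) : Prop :=
  IsProbabilityMeasure η ∧
    ∀ (n : ℕ) (c : EulerPath),
      η {x | ∀ i < n, x i = c i} = ∏ i ∈ Finset.range n, ((i : ℝ≥0∞) + 2)⁻¹
/-- The strict partial order on paths: `x` is less than `y` if they eventually agree,
pass through the same vertex just after the last disagreement, and at the last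
disagreement the edge of `x` strictly precedes the edge of `y` in the order on edges
into that common vertex: the right edges (those from the source with the smaller
vertex label) come before the left edges, and edges with the same source are ordered
by their outgoing labels. -/
def pathLT (x y : EulerPath) : Prop :=
  ∃ N, (∀ n, N < n → x n = y n) ∧ kv x (N + 1) = kv y (N + 1) ∧
    (kv x N < kv y N ∨ (kv x N = kv y N ∧ (x N : ℕ) < (y N : ℕ)))

/-- The set of maximal paths. -/
def Xmax : Set EulerPath := {x | ¬ ∃ y, pathLT x y}

/-- The set of minimal paths. -/
def Xmin : Set EulerPath := {x | ¬ ∃ y, pathLT y x}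

/-! A maximal path must enter every vertex `(n+1, k)` with `k ≤ n` through the largest edge,
the left edge with label `k`; otherwise it could be replaced below level `n+1` by a larger path
into the same vertex. Hence a maximal path turns right until its first left turn, at some
level `m`, and then turns left with label `m` forever, so there are only countably many. The
reflection `k ↦ n - k` of the Euler graph reverses the order and exchanges maximal and minimal
paths. -/

lemma kv_succ (x : EulerPath) (n : ℕ) :
    kv x (n + 1) = if (x n : ℕ) ≤ kv x n then kv x n else kv x n + 1 := rfl

lemma kv_le (x : EulerPath) (n : ℕ) : kv x n ≤ n := by
  induction n with
  | zero => rfl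
  | succ n ih => rw [kv_succ]; split <;> omega

lemma kv_succ_of_le {x : EulerPath} {n : ℕ} (h : (x n : ℕ) ≤ kv x n) : kv x (n + 1) = kv x n :=
  if_pos h

lemma kv_succ_of_lt {x : EulerPath} {n : ℕ} (h : kv x n < x n) : kv x (n + 1) = kv x n + 1 :=
  if_neg (by omega)

lemma kv_succ_le (x : EulerPath) (n : ℕ) : kv x (n + 1) ≤ kv x n + 1 := by
  rw [kv_succ]; split <;> omega

lemma kv_congr {x y : EulerPath} {n : ℕ} (h : ∀ i < n, x i = y i) : kv x n = kv y n := by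
  induction n with
  | zero => rfl
  | succ n ih => rw [kv_succ, kv_succ, ih fun i hi => h i (by omega), h n n.lt_succ_self]

section Reflection

/-- The mirror image of a path under the reflection `(n, k) ↦ (n, n - k)` of the Euler graph. -/
def revPath (x : EulerPath) : EulerPath := fun n => (x n).rev

lemma revPath_involutive : Function.Involutive revPath :=
  fun x => funext fun n => Fin.rev_rev (x n)

lemma kv_revPath (x : EulerPath) (n : ℕ) : kv (revPath x) n = n - kv x n := by
  induction n with
  | zero => rfl
  | succ n ih =>
    have := kv_le x n
    have := (x n).isLt
    have hrev : (revPath x n : ℕ) = n + 1 - x n := by simp only [revPath, Fin.val_rev]; omega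
    by_cases h : (x n : ℕ) ≤ kv x n
    · rw [kv_succ_of_le h, kv_succ_of_lt (x := revPath x) (by omega)]; omega
    · rw [kv_succ_of_lt (x := x) (by omega), kv_succ_of_le (x := revPath x) (by omega)]; omega

lemma pathLT_revPath_iff {x y : EulerPath} : pathLT (revPath x) (revPath y) ↔ pathLT y x := by
  refine exists_congr fun N => and_congr ?_ (and_congr ?_ ?_)
  · exact forall_congr' fun n => imp_congr_right fun _ =>
      (Fin.rev_injective.eq_iff).trans eq_comm
  · have := kv_le x (N + 1); have := kv_le y (N + 1)
    rw [kv_revPath, kv_revPath]; omega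
  · have := kv_le x N; have := kv_le y N
    simp only [kv_revPath, revPath, Fin.val_rev]; omega

lemma preimage_revPath_Xmax : revPath ⁻¹' Xmax = Xmin := by
  ext x
  exact not_congr <|
    revPath_involutive.surjective.exists.trans (exists_congr fun y => pathLT_revPath_iff)

end Reflection

section Maximal

def diagPath : EulerPath := fun n => Fin.last (n + 1)

/-- The maximal path whose first left turn is at level `m`. -/
def turnPath (m : ℕ) : EulerPath := fun n => ⟨min (n + 1) m, by omega⟩

lemma kv_diagPath (n : ℕ) : kv diagPath n = n := by
  induction n with
  | zero => rfl
  | succ n ih => rw [kv_succ, ih, if_neg (by simp [diagPath])]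

lemma kv_turnPath (m n : ℕ) : kv (turnPath m) n = min n m := by
  induction n with
  | zero => simp [kv]
  | succ n ih =>
    have hval : (turnPath m n : ℕ) = min (n + 1) m := rfl
    by_cases h : n < m
    · rw [kv_succ_of_lt (by omega), ih]; omega
    · rw [kv_succ_of_le (by omega), ih]; omega

def splice (y x : EulerPath) (N : ℕ) : EulerPath := fun n => if n ≤ N then y n else x n

lemma kv_splice {y x : EulerPath} {N n : ℕ} (hn : n ≤ N + 1) : kv (splice y x N) n = kv y n :=
  kv_congr fun i hi => if_pos (by omega)

lemma kv_eq_and_val_eq_of_mem_Xmax {x : EulerPath} (hx : x ∈ Xmax) {N : ℕ} (hN : kv x (N + 1) ≤ N) :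
    kv x N = kv x (N + 1) ∧ (x N : ℕ) = kv x (N + 1) := by
  by_contra hne
  apply hx
  refine ⟨splice (turnPath (kv x (N + 1))) x N, N, fun n hn => (if_neg (by omega)).symm, ?_, ?_⟩
  · rw [kv_splice le_rfl, kv_turnPath]; omega
  · have hval : (splice (turnPath (kv x (N + 1))) x N N : ℕ) = kv x (N + 1) := by
      simp only [splice, turnPath, le_rfl, if_true]; omega
    rw [kv_splice (by omega), kv_turnPath, hval, min_eq_right hN]
    by_cases h : (x N : ℕ) ≤ kv x N
    · have := kv_succ_of_le h; omega
    · have := kv_succ_of_lt (not_le.mp h); omega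

lemma val_eq_kv_succ_of_mem_Xmax {x : EulerPath} (hx : x ∈ Xmax) (n : ℕ) : (x n : ℕ) = kv x (n + 1) := by
  by_cases hn : kv x (n + 1) ≤ n
  · exact (kv_eq_and_val_eq_of_mem_Xmax hx hn).2
  · have := kv_le x n; have := (x n).isLt
    by_cases h : (x n : ℕ) ≤ kv x n
    · have := kv_succ_of_le h; omega
    · have := kv_succ_of_lt (not_le.mp h); omega

lemma kv_eq_of_mem_Xmax {x : EulerPath} (hx : x ∈ Xmax) :
    kv x = kv diagPath ∨ ∃ m, kv x = kv (turnPath m) := by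
  by_cases hturn : ∃ n, kv x (n + 1) ≤ n
  · refine .inr ⟨Nat.find hturn, funext fun n => ?_⟩
    rw [kv_turnPath]
    have before : ∀ n ≤ Nat.find hturn, kv x n = n := fun
      | 0, _ => rfl
      | n + 1, hn => by
        have := Nat.find_min hturn (by omega : n < Nat.find hturn)
        have := kv_le x (n + 1)
        omega
    have after : ∀ n ≥ Nat.find hturn, kv x n = Nat.find hturn := by
      intro n hn
      induction n, hn using Nat.le_induction with
      | base => exact before _ le_rfl
      | succ n hn ih =>
        have : kv x (n + 1) ≤ n := by
          rcases hn.eq_or_lt with h | h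
          · rw [← h]; exact Nat.find_spec hturn
          · have := kv_succ_le x n; omega
        exact (kv_eq_and_val_eq_of_mem_Xmax hx this).1 ▸ ih
    rcases le_total n (Nat.find hturn) with h | h
    · rw [before n h, min_eq_left h]
    · rw [after n h, min_eq_right h]
  · push Not at hturn
    refine .inl (funext fun n => ?_)
    rw [kv_diagPath]
    cases n with
    | zero => rfl
    | succ n => have := kv_le x (n + 1); have := hturn n; omega

lemma Xmax_subset_insert_range : Xmax ⊆ insert diagPath (Set.range turnPath) := by
  intro x hx
  have hext : ∀ y : EulerPath, (∀ n, (y n : ℕ) = kv y (n + 1)) → kv x = kv y → x = y :=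
    fun y hy hkv => funext fun n => Fin.ext (by rw [val_eq_kv_succ_of_mem_Xmax hx, hy, hkv])
  rcases kv_eq_of_mem_Xmax hx with h | ⟨m, h⟩
  · exact .inl (hext _ (fun n => by rw [kv_diagPath]; rfl) h)
  · exact .inr ⟨m, (hext _ (fun n => by rw [kv_turnPath]; rfl) h).symm⟩

lemma Xmax_countable : Xmax.Countable :=
  ((Set.countable_range turnPath).insert diagPath).mono Xmax_subset_insert_range

end Maximal

/-- The sets of maximal and of minimal paths in the Euler path space are countable. -/
theorem xmax_xmin_countable : Xmax.Countable ∧ Xmin.Countable :=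
  ⟨Xmax_countable, preimage_revPath_Xmax ▸ Xmax_countable.preimage revPath_involutive.injective⟩
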